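/- Let I ⊆ S = K[x,y,z,…] (t ≥ 2 variables) and fix a field K. For every positive integer n there exists an 𝔪-primary monomial ideal I ⊆ S = K[x_1,…,x_t] such that reg(S/I) − v(I) = n, where, since dim(S/I) = 0, reg(S/I) equals the largest integer k such that the degree-k graded component of S/I is nonzero (equivalently, the largest degree of a monomial of S not belonging to I). -/

import Mathlib

open MvPolynomial

noncomputable section

/-- The `v`-number of a graded ideal `I ⊆ K[x_1,…,x_t]`: the least `k ≥ 0` such that there is a
homogeneous polynomial `f` of degree `k` with `(I : f)` an associated prime of `S/I`. -/
def vNumber {σ K : Type*} [Field K] (I : Ideal (MvPolynomial σ K)) : ℕ :=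
  sInf {k : ℕ | ∃ f : MvPolynomial σ K, f.IsHomogeneous k ∧
    Submodule.colon I (Ideal.span {f}) ∈
      associatedPrimes (MvPolynomial σ K) (MvPolynomial σ K ⧸ I)}

/-- The edge ideal of a simple graph: generated by `x_i * x_j` for edges `{x_i, x_j}`. -/
def edgeIdeal (K : Type*) [Field K] {V : Type*} (G : SimpleGraph V) :
    Ideal (MvPolynomial V K) :=
  Ideal.span {m | ∃ i j, G.Adj i j ∧ m = X i * X j}

/-- `I` is a monomial ideal: generated by a set of monomials. -/
def IsMonomialIdeal {σ K : Type*} [Field K] (I : Ideal (MvPolynomial σ K)) : Prop :=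
  ∃ A : Set (σ →₀ ℕ), I = Ideal.span ((fun a => (monomial a (1 : K))) '' A)

/-- The graded maximal ideal `𝔪 = ⟨x_1,…,x_t⟩`. -/
def maxIdeal (K : Type*) [Field K] (σ : Type*) : Ideal (MvPolynomial σ K) :=
  Ideal.span (Set.range (X : σ → MvPolynomial σ K))

/-- `α(I)`: the minimum degree of a nonzero element of `I`. -/
def alphaNumber {σ K : Type*} [Field K] (I : Ideal (MvPolynomial σ K)) : ℕ :=
  sInf {d : ℕ | ∃ f ∈ I, f ≠ 0 ∧ f.totalDegree = d}

/-- Exponent vectors of the minimal monomial generators of a monomial ideal `I`: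
monomials in `I` none of whose proper divisors lies in `I`. -/
def minimalGenerators {σ K : Type*} [Field K] (I : Ideal (MvPolynomial σ K)) :
    Set (σ →₀ ℕ) :=
  {a | (monomial a (1 : K)) ∈ I ∧
    ∀ b : σ →₀ ℕ, b ≤ a → b ≠ a → (monomial b (1 : K)) ∉ I}

/-!
Take `I` to be the monomial ideal whose standard monomials are `1, x, y, …, y^(n+1)`, i.e.
`I = (x², xy, y^(n+2), x_3, …, x_t)`, so that the top degree of a standard monomial is `n + 1`.
Every variable times `x` lies in `I` while `x ∉ I`, hence `(I : x) = 𝔪` and `v(I) ≤ 1`. And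
`v(I) ≠ 0`: a homogeneous polynomial of degree `0` is a constant, whose colon is `I` or the whole
ring, and neither is prime (`xy ∈ I`).
-/

open MvPolynomial

theorem Ideal.colon_span_singleton_mem_associatedPrimes {R : Type*} [CommRing R] {I : Ideal R}
    {f : R} (h : (I.colon (Ideal.span {f})).IsPrime) :
    I.colon (Ideal.span {f}) ∈ associatedPrimes R (R ⧸ I) := by
  have hann : (⊥ : Submodule R (R ⧸ I)).colon {Ideal.Quotient.mk I f} =
      I.colon (Ideal.span {f}) := by
    ext r
    rw [Submodule.mem_colon_singleton, Submodule.mem_bot, Ideal.mem_colon_span_singleton,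
      ← Ideal.Quotient.eq_zero_iff_mem]
    rfl
  exact ⟨h, Ideal.Quotient.mk I f, by rw [hann, h.radical]⟩

namespace MvPolynomial

variable {σ K : Type*} [Field K]

theorem not_isPrime_colon_of_isHomogeneous_zero {I : Ideal (MvPolynomial σ K)}
    (hI : ¬ I.IsPrime) {f : MvPolynomial σ K} (hf : f.IsHomogeneous 0) :
    ¬ (I.colon (Ideal.span {f})).IsPrime := by
  obtain ⟨c, rfl⟩ : ∃ c, f = C c :=
    ⟨_, totalDegree_eq_zero_iff_eq_C.mp ((totalDegree_zero_iff_isHomogeneous σ).mpr hf)⟩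
  rcases eq_or_ne c 0 with rfl | hc
  · rw [map_zero, Ideal.span_singleton_eq_bot.mpr rfl, Submodule.colon_bot]
    exact fun h => h.ne_top rfl
  · rwa [Ideal.span_singleton_eq_top.mpr ((isUnit_iff_ne_zero.mpr hc).map C),
      Submodule.top_coe, Submodule.colon_univ]

theorem vNumber_eq_one {I : Ideal (MvPolynomial σ K)} (hI : ¬ I.IsPrime)
    {f : MvPolynomial σ K} (hf : f.IsHomogeneous 1)
    (hprime : (I.colon (Ideal.span {f})).IsPrime) : vNumber I = 1 := by
  have hass := Ideal.colon_span_singleton_mem_associatedPrimes hprime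
  rw [vNumber]
  refine le_antisymm (Nat.sInf_le ⟨f, hf, hass⟩) (Nat.one_le_iff_ne_zero.mpr fun h0 => ?_)
  rcases Nat.sInf_eq_zero.mp h0 with ⟨g, hg, hgass⟩ | hempty
  · exact not_isPrime_colon_of_isHomogeneous_zero hI hg hgass.isPrime
  · exact Set.eq_empty_iff_forall_notMem.mp hempty 1 ⟨f, hf, hass⟩

theorem maxIdeal_eq_ker_constantCoeff :
    maxIdeal K σ = RingHom.ker (constantCoeff : MvPolynomial σ K →+* K) := by
  ext p
  rw [maxIdeal, ← Set.image_univ, mem_ideal_span_X_image, RingHom.mem_ker, constantCoeff_eq]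
  simp only [Set.mem_univ, true_and]
  refine ⟨fun h => by_contra fun h0 => ?_, fun h m hm => ?_⟩
  · obtain ⟨i, hi⟩ := h 0 (mem_support_iff.mpr h0)
    exact hi rfl
  · by_contra! hm0
    exact mem_support_iff.mp ((Finsupp.ext hm0 : m = 0) ▸ hm) h

theorem isMaximal_maxIdeal : (maxIdeal K σ).IsMaximal := by
  rw [maxIdeal_eq_ker_constantCoeff]
  exact RingHom.ker_isMaximal_of_surjective _ fun r => ⟨C r, constantCoeff_C σ r⟩

theorem radical_eq_maxIdeal_of_forall_X_pow_mem {I : Ideal (MvPolynomial σ K)} (hI : I ≠ ⊤)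
    (h : ∀ i, ∃ k, X i ^ k ∈ I) : I.radical = maxIdeal K σ :=
  (isMaximal_maxIdeal.eq_of_le (Ideal.radical_eq_top.not.mpr hI)
    (Ideal.span_le.mpr (Set.range_subset_iff.mpr h))).symm

variable (K) in
def idealOfStandardMonomials (D : Set (σ →₀ ℕ)) : Ideal (MvPolynomial σ K) :=
  Ideal.span ((fun a => monomial a (1 : K)) '' Dᶜ)

section StandardMonomials

variable {D : Set (σ →₀ ℕ)}

theorem monomial_one_mem_idealOfStandardMonomials_iff (hD : IsLowerSet D) {a : σ →₀ ℕ} :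
    monomial a (1 : K) ∈ idealOfStandardMonomials K D ↔ a ∉ D := by
  classical
  rw [idealOfStandardMonomials, mem_ideal_span_monomial_image, support_monomial,
    if_neg one_ne_zero]
  simp only [Finset.mem_singleton, forall_eq]
  exact ⟨fun ⟨s, hs, hsa⟩ ha => hs (hD hsa ha), fun ha => ⟨a, ha, le_rfl⟩⟩

theorem idealOfStandardMonomials_ne_top (hD : IsLowerSet D) (h0 : 0 ∈ D) :
    idealOfStandardMonomials K D ≠ ⊤ := by
  rw [Ne, Ideal.eq_top_iff_one, one_def, monomial_one_mem_idealOfStandardMonomials_iff hD]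
  exact not_not.mpr h0

theorem radical_idealOfStandardMonomials (hD : IsLowerSet D) (hfin : D.Finite) (h0 : 0 ∈ D) :
    (idealOfStandardMonomials K D).radical = maxIdeal K σ := by
  refine radical_eq_maxIdeal_of_forall_X_pow_mem (idealOfStandardMonomials_ne_top hD h0)
    fun i => ?_
  obtain ⟨k, hk⟩ : ∃ k, Finsupp.single i k ∉ D := by
    by_contra! h
    exact Set.infinite_range_of_injective (Finsupp.single_injective i)
      (hfin.subset (Set.range_subset_iff.mpr h))
  exact ⟨k, by rwa [X_pow_eq_monomial, monomial_one_mem_idealOfStandardMonomials_iff hD]⟩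

theorem not_isPrime_idealOfStandardMonomials (hD : IsLowerSet D) {a b : σ →₀ ℕ} (ha : a ∈ D)
    (hb : b ∈ D) (hab : a + b ∉ D) : ¬ (idealOfStandardMonomials K D).IsPrime := by
  intro hprime
  have hmul : monomial a (1 : K) * monomial b 1 ∈ idealOfStandardMonomials K D := by
    rwa [monomial_mul, one_mul, monomial_one_mem_idealOfStandardMonomials_iff hD]
  rcases hprime.mem_or_mem hmul with h | h <;>
    rw [monomial_one_mem_idealOfStandardMonomials_iff hD] at h <;> contradiction

theorem colon_monomial_idealOfStandardMonomials (hD : IsLowerSet D) {a : σ →₀ ℕ} (ha : a ∈ D)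
    (hsocle : ∀ i, a + Finsupp.single i 1 ∉ D) :
    (idealOfStandardMonomials K D).colon (Ideal.span {monomial a (1 : K)}) = maxIdeal K σ := by
  refine (isMaximal_maxIdeal.eq_of_le ?_ ?_).symm
  · rw [Ne, Ideal.eq_top_iff_one, Ideal.mem_colon_span_singleton, one_mul,
      monomial_one_mem_idealOfStandardMonomials_iff hD]
    exact not_not.mpr ha
  · rw [maxIdeal, Ideal.span_le, Set.range_subset_iff]
    intro i
    rw [SetLike.mem_coe, Ideal.mem_colon_span_singleton, X, monomial_mul, one_mul, add_comm,
      monomial_one_mem_idealOfStandardMonomials_iff hD]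
    exact hsocle i

end StandardMonomials

section Hook

variable {x y : σ} {m : ℕ}

/-- Exponents of the monomials `1, x, y, y², …, y^m`. -/
def hookExponents (x y : σ) (m : ℕ) : Set (σ →₀ ℕ) :=
  Set.Iic (Finsupp.single x 1) ∪ Set.Iic (Finsupp.single y m)

theorem isLowerSet_hookExponents : IsLowerSet (hookExponents x y m) :=
  isLowerSet_Iic _ |>.union (isLowerSet_Iic _)

theorem finite_hookExponents : (hookExponents x y m).Finite := by
  classical
  exact (Set.finite_Iic _).union (Set.finite_Iic _)

theorem zero_mem_hookExponents : 0 ∈ hookExponents x y m :=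
  Or.inl (Set.mem_Iic.mpr zero_le)

theorem single_left_mem_hookExponents : Finsupp.single x 1 ∈ hookExponents x y m :=
  Or.inl (Set.mem_Iic.mpr le_rfl)

theorem single_right_mem_hookExponents (hm : 0 < m) : Finsupp.single y 1 ∈ hookExponents x y m :=
  Or.inr (Finsupp.single_le_single.mpr hm)

theorem single_left_add_single_notMem_hookExponents (hxy : x ≠ y) (i : σ) :
    Finsupp.single x 1 + Finsupp.single i 1 ∉ hookExponents x y m := by
  rintro (h | h)
  · have := h i
    simp [Finsupp.add_apply] at this
  · have := h x
    simp [Finsupp.add_apply, hxy] at this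

theorem isGreatest_degree_hookExponents [Fintype σ] (hm : 0 < m) :
    IsGreatest {k | ∃ a ∈ hookExponents x y m, ∑ i, a i = k} m := by
  refine ⟨⟨Finsupp.single y m, Or.inr (Set.mem_Iic.mpr le_rfl), by simp⟩, ?_⟩
  have hdeg {a b : σ →₀ ℕ} (h : a ≤ b) : ∑ i, a i ≤ ∑ i, b i :=
    Finset.sum_le_sum fun i _ => h i
  rintro k ⟨a, ha | ha, rfl⟩
  · calc ∑ i, a i ≤ ∑ i, Finsupp.single x 1 i := hdeg ha
      _ = 1 := by simp
      _ ≤ m := hm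
  · calc ∑ i, a i ≤ ∑ i, Finsupp.single y m i := hdeg ha
      _ = m := by simp

end Hook

end MvPolynomial

theorem exists_m_primary_reg_sub_vNumber_general {K : Type*} [Field K] (t : ℕ) (ht : 2 ≤ t)
    (n : ℕ) :
    ∃ I : Ideal (MvPolynomial (Fin t) K),
      IsMonomialIdeal I ∧ I.radical = maxIdeal K (Fin t) ∧
      sSup {k : ℕ | ∃ a : Fin t →₀ ℕ, monomial a (1 : K) ∉ I ∧ (∑ i, a i) = k} - vNumber I
        = n := by
  let x : Fin t := ⟨0, by omega⟩
  let y : Fin t := ⟨1, by omega⟩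
  have hxy : x ≠ y := by simp [x, y, Fin.ext_iff]
  let D := hookExponents x y (n + 1)
  have hD : IsLowerSet D := isLowerSet_hookExponents
  set I := idealOfStandardMonomials K D
  have hsocle := single_left_add_single_notMem_hookExponents (m := n + 1) hxy
  have hnotPrime : ¬ I.IsPrime := not_isPrime_idealOfStandardMonomials hD
    single_left_mem_hookExponents (single_right_mem_hookExponents n.succ_pos) (hsocle y)
  have hcolon : I.colon (Ideal.span {(X x : MvPolynomial (Fin t) K)}) = maxIdeal K (Fin t) :=
    colon_monomial_idealOfStandardMonomials hD single_left_mem_hookExponents hsocle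
  have hv : vNumber I = 1 :=
    vNumber_eq_one hnotPrime (isHomogeneous_X K x) (hcolon ▸ isMaximal_maxIdeal.isPrime)
  have hreg : sSup {k | ∃ a : Fin t →₀ ℕ, monomial a (1 : K) ∉ I ∧ ∑ i, a i = k} = n + 1 := by
    simp_rw [I, monomial_one_mem_idealOfStandardMonomials_iff hD, not_not]
    exact (isGreatest_degree_hookExponents n.succ_pos).csSup_eq
  refine ⟨I, ⟨Dᶜ, rfl⟩,
    radical_idealOfStandardMonomials hD finite_hookExponents zero_mem_hookExponents, ?_⟩
  rw [hreg, hv, Nat.add_sub_cancel]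

/-- for every n ≥ 1 there is an 𝔪-primary monomial ideal with
reg(S/I) - v(I) = n, where reg(S/I) is the largest degree of a monomial not in I. -/
theorem exists_m_primary_reg_sub_vNumber {K : Type*} [Field K] (t : ℕ) (ht : 2 ≤ t)
    (n : ℕ) (hn : 0 < n) :
    ∃ I : Ideal (MvPolynomial (Fin t) K),
      IsMonomialIdeal I ∧ I.radical = maxIdeal K (Fin t) ∧
      sSup {k : ℕ | ∃ a : Fin t →₀ ℕ, monomial a (1 : K) ∉ I ∧ (∑ i, a i) = k} - vNumber I
        = n :=
  exists_m_primary_reg_sub_vNumber_general t ht n
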